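/- Let d ≥ 2 and let ‖·‖ be a continuous quasi-norm on ℝ^d that is monotone (for x, y in the same closed orthant with |x_j| ≤ |y_j| for all j one has ‖x‖ ≤ ‖y‖). Let x, y ∈ ℝ^d satisfy 0 ≤ x_j ≤ y_j for all j, x_d = y_d = 0 and ‖y‖ ≤ 1, and suppose σ, τ ∈ [0, 1] satisfy ‖x + σ·𝟙‖ = 1 and ‖y + τ·𝟙‖ = 1, where σ and τ are the minimal such shifts (σ = min{t ≥ 0 : ‖x + t·𝟙‖ = 1} and similarly for τ). Then τ ≤ σ ≤ τ + max_{1≤j≤d} |x_j − y_j|. -/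
import Mathlib


open scoped Pointwise BigOperators

/-- A quasi-norm on `ℝ^d`: nonnegative, definite, absolutely homogeneous, and satisfying the
quasi-triangle inequality `‖x + y‖ ≤ C(‖x‖ + ‖y‖)` for some `C ≥ 1`. -/
def IsQuasiNorm {d : ℕ} (f : (Fin d → ℝ) → ℝ) : Prop :=
  (∀ x, 0 ≤ f x) ∧ (∀ x, f x = 0 ↔ x = 0) ∧
  (∀ (l : ℝ) (x), f (l • x) = |l| * f x) ∧
  (∃ C : ℝ, 1 ≤ C ∧ ∀ x y, f (x + y) ≤ C * (f x + f y))

/-- The `ℓ_∞` norm on `ℝ^d`. -/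
noncomputable def supNorm {d : ℕ} (x : Fin d → ℝ) : ℝ :=
  ⨆ i, |x i|

/-- The closed unit ball of `ℓ_∞^d`. -/
def supBall (d : ℕ) : Set (Fin d → ℝ) := {x | supNorm x ≤ 1}

/-- The orthogonal projection of `ℝ^d` onto the hyperplane `{x : x_i = 0}`,
setting the `i`-th coordinate to zero. -/
def proj {d : ℕ} (i : Fin d) (x : Fin d → ℝ) : Fin d → ℝ :=
  Function.update x i 0

/-- The `k`-th (dyadic) entropy number of `K` with respect to the "unit ball" `B`:
the infimum of all `ε > 0` such that `K` can be covered by `2^(k-1)` translates of `ε • B`. -/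
noncomputable def entropyNumber {d : ℕ} (K B : Set (Fin d → ℝ)) (k : ℕ) : ℝ :=
  sInf {ε : ℝ | 0 < ε ∧ ∃ c : Fin (2 ^ (k - 1)) → (Fin d → ℝ),
    K ⊆ ⋃ j, (c j +ᵥ ε • B)}

/-- Monotonicity of a quasi-norm: for `x, y` lying in the same closed orthant
(equivalently `x_j y_j ≥ 0` for all `j`) with `|x_j| ≤ |y_j|` for all `j`, `‖x‖ ≤ ‖y‖`. -/
def IsMonotoneQuasiNorm {d : ℕ} (f : (Fin d → ℝ) → ℝ) : Prop :=
  ∀ x y : Fin d → ℝ, (∀ j, 0 ≤ x j * y j) → (∀ j, |x j| ≤ |y j|) → f x ≤ f y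

/-- Let `‖·‖` be a continuous monotone quasi-norm on `ℝ^d` (`d ≥ 2`),
let `x, y` satisfy `0 ≤ x_j ≤ y_j`, `x_d = y_d = 0`, `‖y‖ ≤ 1`, and let `σ, τ ∈ [0,1]` be
the minimal shifts with `‖x + σ·𝟙‖ = 1` and `‖y + τ·𝟙‖ = 1`.
Then `τ ≤ σ ≤ τ + max_j |x_j − y_j|`. -/
theorem shift_monotone_general (d : ℕ) (hd : 2 ≤ d)
    (n : (Fin d → ℝ) → ℝ) (hn : IsQuasiNorm n) (hnc : Continuous n)
    (hmono : IsMonotoneQuasiNorm n)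
    (x y : Fin d → ℝ) (hx : ∀ j, 0 ≤ x j) (hxy : ∀ j, x j ≤ y j)
    (hxd : x ⟨d - 1, by omega⟩ = 0) (hyd : y ⟨d - 1, by omega⟩ = 0)
    (hy1 : n y ≤ 1)
    (σ τ : ℝ) (hσ : σ ∈ Set.Icc (0 : ℝ) 1) (hτ : τ ∈ Set.Icc (0 : ℝ) 1)
    (hσ1 : n (x + σ • (1 : Fin d → ℝ)) = 1)
    (hσmin : ∀ t : ℝ, 0 ≤ t → n (x + t • (1 : Fin d → ℝ)) = 1 → σ ≤ t)
    (hτ1 : n (y + τ • (1 : Fin d → ℝ)) = 1)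
    (hτmin : ∀ t : ℝ, 0 ≤ t → n (y + t • (1 : Fin d → ℝ)) = 1 → τ ≤ t) :
    τ ≤ σ ∧ σ ≤ τ + supNorm (x - y) := by
  obtain ⟨hσ0, hσu⟩ := hσ
  obtain ⟨hτ0, hτu⟩ := hτ
  have hMb : ∀ j, y j - x j ≤ supNorm (x - y) := by
    intro j
    have h1 : |(x - y) j| ≤ supNorm (x - y) := by
      unfold supNorm
      exact le_ciSup (f := fun i => |(x - y) i|) (Set.Finite.bddAbove (Set.finite_range _)) j
    have h2 : |(x - y) j| = y j - x j := by
      rw [Pi.sub_apply, abs_sub_comm]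
      exact abs_of_nonneg (sub_nonneg.2 (hxy j))
    linarith
  have hM0 : 0 ≤ supNorm (x - y) := by
    have := hMb ⟨0, by omega⟩
    have := hxy (⟨0, by omega⟩ : Fin d)
    linarith
  have hcont : ∀ v : Fin d → ℝ, Continuous fun t : ℝ => n (v + t • (1 : Fin d → ℝ)) :=
    fun v => hnc.comp (continuous_const.add (continuous_id.smul continuous_const))
  -- comparison lemma
  have hcmp : ∀ (a b : Fin d → ℝ) (s t : ℝ), 0 ≤ s → s ≤ t → (∀ j, 0 ≤ a j) →
      (∀ j, a j ≤ b j) → n (a + s • (1 : Fin d → ℝ)) ≤ n (b + t • (1 : Fin d → ℝ)) := by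
    intro a b s t hs hst ha hab
    apply hmono
    · intro j
      have h1 : 0 ≤ a j + s := add_nonneg (ha j) hs
      have h2 : 0 ≤ b j + t := by have := hab j; linarith
      simpa using mul_nonneg h1 h2
    · intro j
      have h1 : 0 ≤ a j + s := add_nonneg (ha j) hs
      have h2 : a j + s ≤ b j + t := by have := hab j; linarith
      simp only [Pi.add_apply, Pi.smul_apply, Pi.one_apply, smul_eq_mul, mul_one]
      rw [abs_of_nonneg h1, abs_of_nonneg (le_trans h1 h2)]
      exact h2
  -- Part 1 : τ ≤ σ
  have key1 : (1 : ℝ) ≤ n (y + σ • (1 : Fin d → ℝ)) := by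
    rw [← hσ1]; exact hcmp x y σ σ hσ0 le_rfl hx hxy
  have hy0 : n (y + (0 : ℝ) • (1 : Fin d → ℝ)) ≤ 1 := by simpa using hy1
  have h1 : (1 : ℝ) ∈ (fun t => n (y + t • (1 : Fin d → ℝ))) '' Set.Icc 0 σ :=
    intermediate_value_Icc hσ0 ((hcont y).continuousOn) ⟨hy0, key1⟩
  obtain ⟨t, ht, ht1⟩ := h1
  have hτσ : τ ≤ σ := le_trans (hτmin t ht.1 ht1) ht.2
  -- Part 2 : σ ≤ τ + M
  refine ⟨hτσ, ?_⟩
  have hya : ∀ j, 0 ≤ y j := fun j => le_trans (hx j) (hxy j)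
  have keyA : n (x + τ • (1 : Fin d → ℝ)) ≤ 1 := by
    rw [← hτ1]; exact hcmp x y τ τ hτ0 le_rfl hx hxy
  have keyB : (1 : ℝ) ≤ n (x + (τ + supNorm (x - y)) • (1 : Fin d → ℝ)) := by
    rw [← hτ1]
    apply hmono
    · intro j
      have h1 : 0 ≤ y j + τ := add_nonneg (hya j) hτ0
      have h2 : 0 ≤ x j + (τ + supNorm (x - y)) := by have := hx j; linarith
      simpa using mul_nonneg h1 h2
    · intro j
      have h1 : 0 ≤ y j + τ := add_nonneg (hya j) hτ0
      have h2 : y j + τ ≤ x j + (τ + supNorm (x - y)) := by have := hMb j; linarith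
      simp only [Pi.add_apply, Pi.smul_apply, Pi.one_apply, smul_eq_mul, mul_one]
      rw [abs_of_nonneg h1, abs_of_nonneg (le_trans h1 h2)]
      exact h2
  have h2 : (1 : ℝ) ∈ (fun t => n (x + t • (1 : Fin d → ℝ))) '' Set.Icc τ (τ + supNorm (x - y)) :=
    intermediate_value_Icc (by linarith) ((hcont x).continuousOn) ⟨keyA, keyB⟩
  obtain ⟨t, ht, ht1⟩ := h2
  exact le_trans (hσmin t (le_trans hτ0 ht.1) ht1) ht.2
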